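/- Let W be SupCon-like for a partition of {1,…,n} into C > 1 classes all of the same size ℓ ≥ 2, let τ > 0, let q ≥ C, and let 𝒮 be the set of n×n matrices of the form G/τ with G symmetric positive semidefinite with unit diagonal and rank(G) ≤ q. If μ_1,…,μ_C ∈ ℝ^q are unit vectors such that the matrix with entries ⟨μ_{c(i)}, μ_{c(j)}⟩/τ (where c(i) is the class of i) is the global minimizer of L_W over 𝒮, then the μ_c form the vertices of a regular simplex: ⟨μ_c, μ_{c'}⟩ = -1/(C-1) for all c ≠ c', and μ_1 + ⋯ + μ_C = 0. -/

import Mathlib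

open scoped BigOperators

/-- The weighted InfoNCE loss. -/
noncomputable def infoNCE {n : ℕ} (W S : Matrix (Fin n) (Fin n) ℝ) : ℝ :=
  -(1 / (n : ℝ)) * ∑ i : Fin n, ∑ j ∈ Finset.univ.erase i,
    (W i j / ∑ k ∈ Finset.univ.erase i, W i k) *
      Real.log (Real.exp (S i j) / ∑ k ∈ Finset.univ.erase i, Real.exp (S i k))

/-- The entropic lower bound (with the convention `0 * log 0 = 0`,
which holds automatically since `Real.log 0 = 0`). -/
noncomputable def entropicBound {n : ℕ} (W : Matrix (Fin n) (Fin n) ℝ) : ℝ :=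
  -(1 / (n : ℝ)) * ∑ i : Fin n, ∑ j ∈ Finset.univ.erase i,
    (W i j / ∑ k ∈ Finset.univ.erase i, W i k) *
      Real.log (W i j / ∑ k ∈ Finset.univ.erase i, W i k)


/-- SupCon-like weight matrix for the class assignment `cls`:
`w_{ij} = 1` if `i` and `j` are in the same class and `0` otherwise. -/
def supconW {n C : ℕ} (cls : Fin n → Fin C) : Matrix (Fin n) (Fin n) ℝ :=
  Matrix.of fun i j => if cls i = cls j then 1 else 0

/-- Action of a permutation on a matrix: `(σX)_{ij} = X_{σ(i)σ(j)}`. -/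
def permMat {n : ℕ} (σ : Equiv.Perm (Fin n)) (X : Matrix (Fin n) (Fin n) ℝ) :
    Matrix (Fin n) (Fin n) ℝ :=
  Matrix.of fun i j => X (σ i) (σ j)

/-- `S` is `W`-symmetric: every permutation fixing `W` fixes `S`. -/
def WSymmetric {n : ℕ} (W S : Matrix (Fin n) (Fin n) ℝ) : Prop :=
  ∀ σ : Equiv.Perm (Fin n), permMat σ W = W → permMat σ S = S

/-- The size of class `c` under the assignment `cls`. -/
def classSize {n C : ℕ} (cls : Fin n → Fin C) (c : Fin C) : ℕ :=
  (Finset.univ.filter fun i => cls i = c).card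

/-- The set `𝒮₀` of matrices of the form `G/τ` with `G` symmetric PSD with unit
diagonal (i.e. a cosine matrix). -/
def gramSet (n : ℕ) (τ : ℝ) : Set (Matrix (Fin n) (Fin n) ℝ) :=
  {S | ∃ G : Matrix (Fin n) (Fin n) ℝ,
    G.PosSemidef ∧ (∀ i, G i i = 1) ∧ S = τ⁻¹ • G}

/-- The set `𝒮` of matrices of the form `G/τ` with `G` symmetric PSD with unit
diagonal and rank at most `q`. -/
def gramSetRank (n q : ℕ) (τ : ℝ) : Set (Matrix (Fin n) (Fin n) ℝ) :=
  {S | ∃ G : Matrix (Fin n) (Fin n) ℝ,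
    G.PosSemidef ∧ (∀ i, G i i = 1) ∧ G.rank ≤ q ∧ S = τ⁻¹ • G}


section AuxLemmas

open Finset Matrix

private lemma sum_exp_ge {α : Type*} (s : Finset α) (f : α → ℝ) (m : ℝ)
    (hm : ∑ x ∈ s, (f x - m) = 0) :
    (s.card : ℝ) * Real.exp m ≤ ∑ x ∈ s, Real.exp (f x) := by
  have h1 : ∀ x ∈ s, Real.exp m * (1 + (f x - m)) ≤ Real.exp (f x) := by
    intro x _
    have h2 := Real.add_one_le_exp (f x - m)
    have h3 : Real.exp m * Real.exp (f x - m) = Real.exp (f x) := by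
      rw [← Real.exp_add]; ring_nf
    nlinarith [Real.exp_pos m]
  calc (s.card : ℝ) * Real.exp m
      = ∑ x ∈ s, Real.exp m * (1 + (f x - m)) := by
        rw [← Finset.mul_sum, Finset.sum_add_distrib, Finset.sum_const, hm]
        push_cast; ring
    _ ≤ ∑ x ∈ s, Real.exp (f x) := Finset.sum_le_sum h1

private lemma sum_exp_eq {α : Type*} (s : Finset α) (f : α → ℝ) (m : ℝ)
    (hm : ∑ x ∈ s, (f x - m) = 0)
    (heq : ∑ x ∈ s, Real.exp (f x) = (s.card : ℝ) * Real.exp m) :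
    ∀ x ∈ s, f x = m := by
  have key : ∀ x ∈ s, 0 ≤ Real.exp (f x) - Real.exp m * (1 + (f x - m)) := by
    intro x _
    have h2 := Real.add_one_le_exp (f x - m)
    have h3 : Real.exp m * Real.exp (f x - m) = Real.exp (f x) := by
      rw [← Real.exp_add]; ring_nf
    nlinarith [Real.exp_pos m]
  have hsum : ∑ x ∈ s, (Real.exp (f x) - Real.exp m * (1 + (f x - m))) = 0 := by
    rw [Finset.sum_sub_distrib, heq, ← Finset.mul_sum, Finset.sum_add_distrib,
      Finset.sum_const, hm]
    push_cast; ring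
  have hzero := (Finset.sum_eq_zero_iff_of_nonneg key).mp hsum
  intro x hx
  by_contra hne
  have h4 : f x - m ≠ 0 := sub_ne_zero.mpr hne
  have h5 := Real.add_one_lt_exp h4
  have h3 : Real.exp m * Real.exp (f x - m) = Real.exp (f x) := by
    rw [← Real.exp_add]; ring_nf
  have := hzero x hx
  nlinarith [Real.exp_pos m]

private lemma tangent_log {A B : ℝ} (hA : 0 < A) (hB : 0 < B) (s : ℝ) :
    Real.log (A + B) + B / (A + B) * s ≤ Real.log (A + B * Real.exp s) := by
  have hAB : 0 < A + B := by linarith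
  have key : Real.exp (B / (A + B) * s) ≤ B / (A + B) * Real.exp s + A / (A + B) := by
    have := convexOn_exp.2 (Set.mem_univ s) (Set.mem_univ (0 : ℝ))
      (div_nonneg hB.le hAB.le) (div_nonneg hA.le hAB.le)
      (by field_simp; ring)
    simpa [smul_eq_mul] using this
  have h1 : (A + B) * Real.exp (B / (A + B) * s) ≤ A + B * Real.exp s := by
    have := mul_le_mul_of_nonneg_left key hAB.le
    calc (A + B) * Real.exp (B / (A + B) * s)
        ≤ (A + B) * (B / (A + B) * Real.exp s + A / (A + B)) := this
      _ = A + B * Real.exp s := by field_simp; ring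
  have h2 : 0 < (A + B) * Real.exp (B / (A + B) * s) :=
    mul_pos hAB (Real.exp_pos _)
  calc Real.log (A + B) + B / (A + B) * s
      = Real.log ((A + B) * Real.exp (B / (A + B) * s)) := by
        rw [Real.log_mul hAB.ne' (Real.exp_ne_zero _), Real.log_exp]
    _ ≤ Real.log (A + B * Real.exp s) := Real.log_le_log h2 h1

private lemma tangent_log_eq {A B : ℝ} (hA : 0 < A) (hB : 0 < B) (s : ℝ)
    (h : Real.log (A + B * Real.exp s) = Real.log (A + B) + B / (A + B) * s) :
    s = 0 := by
  have hAB : 0 < A + B := by linarith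
  by_contra hs
  have key : Real.exp (B / (A + B) * s) < B / (A + B) * Real.exp s + A / (A + B) := by
    have := strictConvexOn_exp.2 (Set.mem_univ s) (Set.mem_univ (0 : ℝ)) hs
      (div_pos hB hAB) (div_pos hA hAB) (by field_simp; ring)
    simpa [smul_eq_mul] using this
  have h1 : (A + B) * Real.exp (B / (A + B) * s) < A + B * Real.exp s := by
    have := mul_lt_mul_of_pos_left key hAB
    calc (A + B) * Real.exp (B / (A + B) * s)
        < (A + B) * (B / (A + B) * Real.exp s + A / (A + B)) := this
      _ = A + B * Real.exp s := by field_simp; ring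
  have h2 : 0 < (A + B) * Real.exp (B / (A + B) * s) :=
    mul_pos hAB (Real.exp_pos _)
  have := Real.log_lt_log h2 h1
  rw [Real.log_mul hAB.ne' (Real.exp_ne_zero _), Real.log_exp] at this
  linarith [h ▸ this]


private lemma sum_comp_cls {n C : ℕ} {ℓ : ℕ} (cls : Fin n → Fin C)
    (hsize : ∀ c, classSize cls c = ℓ) (F : Fin C → ℝ) :
    ∑ i : Fin n, F (cls i) = ∑ c : Fin C, (ℓ : ℝ) * F c := by
  rw [← Finset.sum_fiberwise' Finset.univ cls F]
  refine Finset.sum_congr rfl fun c _ => ?_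
  rw [Finset.sum_const]
  have := hsize c
  rw [classSize] at this
  rw [this, nsmul_eq_mul]

private lemma infoNCE_eval {n C ℓ : ℕ} (hC : 0 < C) (hℓ : 2 ≤ ℓ)
    (cls : Fin n → Fin C) (hsize : ∀ c, classSize cls c = ℓ)
    (f : Fin C → Fin C → ℝ) :
    infoNCE (supconW cls) (Matrix.of fun i j => f (cls i) (cls j)) =
      (1 / (C : ℝ)) * ∑ c : Fin C,
        (Real.log ((ℓ : ℝ) * ∑ c' : Fin C, Real.exp (f c c') - Real.exp (f c c)) - f c c) := by
  have hℓR : (2 : ℝ) ≤ (ℓ : ℝ) := by exact_mod_cast hℓ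
  have hCR : (0 : ℝ) < (C : ℝ) := by exact_mod_cast hC
  have hl1 : (0 : ℝ) < (ℓ : ℝ) - 1 := by linarith
  -- n = C * ℓ
  have hn : n = C * ℓ := by
    have h := Finset.card_eq_sum_card_fiberwise
      (f := cls) (s := Finset.univ) (t := Finset.univ) (fun x _ => Finset.mem_univ _)
    simp only [Finset.card_univ, Fintype.card_fin] at h
    have h2 : ∀ c ∈ (Finset.univ : Finset (Fin C)),
        (Finset.univ.filter fun i => cls i = c).card = ℓ := fun c _ => hsize c
    rw [Finset.sum_congr rfl h2, Finset.sum_const, Finset.card_univ, Fintype.card_fin,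
      smul_eq_mul] at h
    exact h
  set E : Fin C → ℝ := fun c =>
    (ℓ : ℝ) * ∑ c' : Fin C, Real.exp (f c c') - Real.exp (f c c) with hE
  have hEpos : ∀ c, 0 < E c := by
    intro c
    have h1 : Real.exp (f c c) ≤ ∑ c' : Fin C, Real.exp (f c c') :=
      Finset.single_le_sum (fun c' _ => (Real.exp_pos (f c c')).le) (Finset.mem_univ c)
    have h2 := Real.exp_pos (f c c)
    simp only [hE]
    nlinarith
  -- weight sums
  have hWsum : ∀ i : Fin n, ∑ k ∈ Finset.univ.erase i, supconW cls i k = (ℓ : ℝ) - 1 := by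
    intro i
    rw [Finset.sum_erase_eq_sub (Finset.mem_univ i)]
    have h1 : ∑ k : Fin n, supconW cls i k = (ℓ : ℝ) := by
      simp only [supconW, Matrix.of_apply]
      rw [Finset.sum_boole]
      have : (Finset.univ.filter fun k => cls i = cls k) =
          (Finset.univ.filter fun k => cls k = cls i) := by
        apply Finset.filter_congr; intro k _; simp [eq_comm]
      rw [this]
      have := hsize (cls i)
      rw [classSize] at this
      rw [this]
    have h2 : supconW cls i i = 1 := by simp [supconW]
    rw [h1, h2]
  -- exp sums
  have hexpsum : ∀ i : Fin n,
      ∑ k ∈ Finset.univ.erase i, Real.exp (f (cls i) (cls k)) = E (cls i) := by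
    intro i
    rw [Finset.sum_erase_eq_sub (Finset.mem_univ i)]
    have h1 : ∑ k : Fin n, Real.exp (f (cls i) (cls k)) =
        (ℓ : ℝ) * ∑ c' : Fin C, Real.exp (f (cls i) c') := by
      rw [sum_comp_cls cls hsize (fun c' => Real.exp (f (cls i) c')), Finset.mul_sum]
    rw [h1]
  -- inner sum evaluation
  have hinner : ∀ i : Fin n,
      (∑ j ∈ Finset.univ.erase i,
        (supconW cls i j / ∑ k ∈ Finset.univ.erase i, supconW cls i k) *
          Real.log (Real.exp (f (cls i) (cls j)) /
            ∑ k ∈ Finset.univ.erase i, Real.exp (f (cls i) (cls k)))) =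
      f (cls i) (cls i) - Real.log (E (cls i)) := by
    intro i
    have hcard : ((Finset.univ.erase i).filter fun j => cls i = cls j).card = ℓ - 1 := by
      have h0 : ((Finset.univ.erase i).filter fun j => cls i = cls j) =
          ((Finset.univ.filter fun j => cls i = cls j).erase i) := by
        rw [Finset.filter_erase]
      rw [h0, Finset.card_erase_of_mem]
      · have : (Finset.univ.filter fun j => cls i = cls j) =
            (Finset.univ.filter fun j => cls j = cls i) := by
          apply Finset.filter_congr; intro k _; simp [eq_comm]
        rw [this]
        have := hsize (cls i)
        rw [classSize] at this
        rw [this]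
      · exact Finset.mem_filter.mpr ⟨Finset.mem_univ i, rfl⟩
    have hstep : ∀ j ∈ Finset.univ.erase i,
        (supconW cls i j / ∑ k ∈ Finset.univ.erase i, supconW cls i k) *
          Real.log (Real.exp (f (cls i) (cls j)) /
            ∑ k ∈ Finset.univ.erase i, Real.exp (f (cls i) (cls k))) =
        if cls i = cls j then
          (((ℓ : ℝ) - 1)⁻¹ * (f (cls i) (cls i) - Real.log (E (cls i)))) else 0 := by
      intro j _
      rw [hWsum i, hexpsum i]
      by_cases h : cls i = cls j
      · rw [if_pos h, ← h]
        have hlog : Real.log (Real.exp (f (cls i) (cls i)) / E (cls i)) =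
            f (cls i) (cls i) - Real.log (E (cls i)) := by
          rw [Real.log_div (Real.exp_ne_zero _) (hEpos (cls i)).ne', Real.log_exp]
        rw [hlog]
        simp only [supconW, Matrix.of_apply, if_pos h]
        field_simp
      · rw [if_neg h]
        simp only [supconW, Matrix.of_apply, if_neg h]
        simp
    rw [Finset.sum_congr rfl hstep, ← Finset.sum_filter, Finset.sum_const, hcard,
      nsmul_eq_mul]
    have hcast : ((ℓ - 1 : ℕ) : ℝ) = (ℓ : ℝ) - 1 := by
      have : 1 ≤ ℓ := by omega
      push_cast [this]; ring
    rw [hcast]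
    field_simp
  -- assemble
  rw [infoNCE]
  have hsum : ∀ i : Fin n, (∑ j ∈ Finset.univ.erase i,
      (supconW cls i j / ∑ k ∈ Finset.univ.erase i, supconW cls i k) *
        Real.log (Real.exp ((Matrix.of fun i j => f (cls i) (cls j)) i j) /
          ∑ k ∈ Finset.univ.erase i, Real.exp ((Matrix.of fun i j => f (cls i) (cls j)) i k))) =
      f (cls i) (cls i) - Real.log (E (cls i)) := by
    intro i
    exact hinner i
  rw [Finset.sum_congr rfl fun i _ => hsum i]
  rw [sum_comp_cls cls hsize (fun c => f c c - Real.log (E c))]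
  have hnR : (n : ℝ) = (C : ℝ) * (ℓ : ℝ) := by exact_mod_cast hn
  rw [hnR, ← Finset.mul_sum]
  have h3 : ∑ c : Fin C, (f c c - Real.log (E c)) =
      -∑ c : Fin C, (Real.log (E c) - f c c) := by
    rw [← Finset.sum_neg_distrib]
    apply Finset.sum_congr rfl; intro c _; ring
  have main : -(1 / ((C : ℝ) * (ℓ : ℝ))) * ((ℓ : ℝ) * ∑ c : Fin C, (f c c - Real.log (E c))) =
      (1 / (C : ℝ)) * ∑ c : Fin C, (Real.log (E c) - f c c) := by
    rw [h3]
    field_simp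
  exact main


private lemma simplex_exists {C q : ℕ} (hC : 1 < C) (hCq : C ≤ q) :
    ∃ ν : Fin C → EuclideanSpace ℝ (Fin q),
      ∀ c c' : Fin C, (inner ℝ (ν c) (ν c') : ℝ) =
        if c = c' then 1 else -1 / ((C : ℝ) - 1) := by
  have hCR : (1 : ℝ) < (C : ℝ) := by exact_mod_cast hC
  have hC1 : (0 : ℝ) < (C : ℝ) - 1 := by linarith
  have hC0 : (0 : ℝ) < (C : ℝ) := by linarith
  set e : Fin C → EuclideanSpace ℝ (Fin q) :=
    fun c => EuclideanSpace.single (Fin.castLE hCq c) (1 : ℝ) with he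
  have hee : ∀ c c' : Fin C, (inner ℝ (e c) (e c') : ℝ) = if c = c' then 1 else 0 := by
    intro c c'
    rw [he]
    simp only [EuclideanSpace.inner_single_left, starRingEnd_apply, star_one, one_mul,
      EuclideanSpace.single_apply]
    by_cases h : c = c'
    · simp [h]
    · have : Fin.castLE hCq c' ≠ Fin.castLE hCq c := by
        intro hcontra
        exact h ((Fin.castLE_injective hCq hcontra).symm)
      simp [h, this]
  set w : EuclideanSpace ℝ (Fin q) := ((C : ℝ)⁻¹) • ∑ c' : Fin C, e c' with hw
  have hew : ∀ c : Fin C, (inner ℝ (e c) w : ℝ) = (C : ℝ)⁻¹ := by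
    intro c
    rw [hw, real_inner_smul_right, inner_sum]
    have : ∑ c' : Fin C, (inner ℝ (e c) (e c') : ℝ) = 1 := by
      rw [Finset.sum_congr rfl fun c' _ => hee c c']
      simp
    rw [this, mul_one]
  have hwe : ∀ c : Fin C, (inner ℝ w (e c) : ℝ) = (C : ℝ)⁻¹ := by
    intro c
    rw [real_inner_comm]
    exact hew c
  have hww : (inner ℝ w w : ℝ) = (C : ℝ)⁻¹ := by
    have h1 : ∀ i : Fin C, (inner ℝ (∑ c' : Fin C, e c') (e i) : ℝ) = 1 := by
      intro i
      rw [sum_inner]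
      rw [Finset.sum_congr rfl fun c' _ => hee c' i]
      simp
    rw [hw, real_inner_smul_right, real_inner_smul_left, inner_sum]
    rw [Finset.sum_congr rfl fun i _ => h1 i]
    simp
    field_simp
  set s : ℝ := Real.sqrt ((C : ℝ) / ((C : ℝ) - 1)) with hs
  have hs2 : s * s = (C : ℝ) / ((C : ℝ) - 1) :=
    Real.mul_self_sqrt (by positivity)
  refine ⟨fun c => s • (e c - w), fun c c' => ?_⟩
  rw [real_inner_smul_left, real_inner_smul_right, inner_sub_left, inner_sub_right,
    inner_sub_right, hee, hew, hwe, hww]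
  by_cases h : c = c'
  · rw [if_pos h, if_pos h]
    rw [← mul_assoc, hs2]
    field_simp
    ring
  · rw [if_neg h, if_neg h]
    rw [← mul_assoc, hs2]
    field_simp
    ring


end AuxLemmas

open Finset Matrix

set_option maxHeartbeats 1000000 in
/-- Graf et al., balanced classes: if the cosine matrix generated by
unit class prototypes minimizes the SupCon loss over rank-constrained cosine matrices
and all classes have the same size `ℓ ≥ 2`, then the prototypes form the vertices of a
regular simplex. -/
theorem statement17 {n C q ℓ : ℕ} (hC : 1 < C) (hℓ : 2 ≤ ℓ)
    (cls : Fin n → Fin C) (hsize : ∀ c : Fin C, classSize cls c = ℓ)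
    (τ : ℝ) (hτ : 0 < τ) (hCq : C ≤ q)
    (μ : Fin C → EuclideanSpace ℝ (Fin q)) (hunit : ∀ c, ‖μ c‖ = 1)
    (hmem : (Matrix.of fun i j => (inner ℝ (μ (cls i)) (μ (cls j)) : ℝ) / τ)
      ∈ gramSetRank n q τ)
    (hmin : ∀ S ∈ gramSetRank n q τ,
      infoNCE (supconW cls)
          (Matrix.of fun i j => (inner ℝ (μ (cls i)) (μ (cls j)) : ℝ) / τ)
        ≤ infoNCE (supconW cls) S) :
    (∀ c c' : Fin C, c ≠ c' → (inner ℝ (μ c) (μ c') : ℝ) = -1 / ((C : ℝ) - 1)) ∧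
      ∑ c : Fin C, μ c = 0 := by
  classical
  have hC0 : 0 < C := by omega
  have hCR : (1 : ℝ) < (C : ℝ) := by exact_mod_cast hC
  have hC1 : (0 : ℝ) < (C : ℝ) - 1 := by linarith
  have hτne : τ ≠ 0 := hτ.ne'
  have hℓR : (2 : ℝ) ≤ (ℓ : ℝ) := by exact_mod_cast hℓ
  have hℓpos : (0 : ℝ) < (ℓ : ℝ) := by linarith
  -- notation
  set z : Fin C → Fin C → ℝ := fun c c' => (inner ℝ (μ c) (μ c') : ℝ) / τ with hzdef
  have hzdiag : ∀ c, z c c = 1 / τ := by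
    intro c
    have h1 : (inner ℝ (μ c) (μ c) : ℝ) = 1 := by
      rw [real_inner_self_eq_norm_mul_norm, hunit c]; ring
    simp only [hzdef, h1]
  set zs : ℝ := -(1 / (((C : ℝ) - 1) * τ)) with hzsdef
  set A : ℝ := ((ℓ : ℝ) - 1) * Real.exp (1 / τ) with hAdef
  set Bc : ℝ := (ℓ : ℝ) * ((C : ℝ) - 1) * Real.exp zs with hBcdef
  have hA : 0 < A := by
    have := Real.exp_pos (1 / τ); rw [hAdef]; nlinarith
  have hB : 0 < Bc := by
    have := Real.exp_pos zs; rw [hBcdef]; positivity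
  have hABpos : 0 < A + Bc := by linarith
  set lam : ℝ := Bc / (A + Bc) with hlamdef
  have hlam : 0 < lam := div_pos hB hABpos
  set Wc : Fin C → ℝ := fun c => ∑ c' ∈ Finset.univ.erase c, Real.exp (z c c') with hWcdef
  have hWcnonneg : ∀ c, 0 ≤ Wc c := by
    intro c
    exact Finset.sum_nonneg fun c' _ => (Real.exp_pos _).le
  have hAWpos : ∀ c, 0 < A + (ℓ : ℝ) * Wc c := by
    intro c
    have := hWcnonneg c
    nlinarith
  set m : Fin C → ℝ := fun c => (∑ c' ∈ Finset.univ.erase c, z c c') / ((C : ℝ) - 1)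
    with hmdef
  have hcarde : ∀ c : Fin C, (Finset.univ.erase c).card = C - 1 := by
    intro c
    rw [Finset.card_erase_of_mem (Finset.mem_univ c), Finset.card_univ, Fintype.card_fin]
  have hcardeR : ∀ c : Fin C, (((Finset.univ.erase c).card : ℝ)) = (C : ℝ) - 1 := by
    intro c
    rw [hcarde c]
    have : 1 ≤ C := hC0
    push_cast [this]; ring
  have hmsum : ∀ c, ∑ c' ∈ Finset.univ.erase c, (z c c' - m c) = 0 := by
    intro c
    rw [Finset.sum_sub_distrib, Finset.sum_const, nsmul_eq_mul, hcardeR c, hmdef]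
    field_simp
    ring
  -- simplex competitor
  obtain ⟨ν, hν⟩ := simplex_exists hC hCq
  set f2 : Fin C → Fin C → ℝ := fun c c' => (inner ℝ (ν c) (ν c') : ℝ) / τ with hf2def
  have hf2eq : ∀ c c', f2 c c' = if c = c' then 1 / τ else zs := by
    intro c c'
    simp only [hf2def, hν]
    by_cases h : c = c'
    · simp [h]
    · rw [if_neg h, if_neg h, hzsdef]
      field_simp
  -- membership of competitor
  set Bm : Matrix (Fin n) (Fin q) ℝ := Matrix.of fun i r => ν (cls i) r with hBmdef
  set G : Matrix (Fin n) (Fin n) ℝ :=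
    Matrix.of fun i j => (inner ℝ (ν (cls i)) (ν (cls j)) : ℝ) with hGdef
  have hGB : G = Bm * Bmᴴ := by
    ext i j
    simp only [hGdef, hBmdef, Matrix.mul_apply, Matrix.conjTranspose_apply, Matrix.of_apply,
      PiLp.inner_apply, RCLike.inner_apply, starRingEnd_apply, star_trivial]
    exact Finset.sum_congr rfl fun x _ => mul_comm _ _
  have hmem2 : τ⁻¹ • G ∈ gramSetRank n q τ := by
    refine ⟨G, ?_, ?_, ?_, rfl⟩
    · rw [hGB]; exact Matrix.posSemidef_self_mul_conjTranspose Bm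
    · intro i
      simp only [hGdef, Matrix.of_apply, hν, if_pos rfl]
      simp
    · rw [hGB, Matrix.rank_self_mul_conjTranspose]
      calc Bm.rank ≤ Fintype.card (Fin q) := Matrix.rank_le_card_width Bm
        _ = q := Fintype.card_fin q
  -- rewrite the two losses
  have hLcand : infoNCE (supconW cls)
      (Matrix.of fun i j => (inner ℝ (μ (cls i)) (μ (cls j)) : ℝ) / τ) =
      (1 / (C : ℝ)) * ∑ c : Fin C,
        (Real.log ((ℓ : ℝ) * ∑ c' : Fin C, Real.exp (z c c') - Real.exp (z c c)) - z c c) :=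
    infoNCE_eval hC0 hℓ cls hsize z
  have hGf2 : τ⁻¹ • G = (Matrix.of fun i j => f2 (cls i) (cls j)) := by
    ext i j
    simp only [hGdef, hf2def, Matrix.smul_apply, Matrix.of_apply, smul_eq_mul]
    ring
  have hLstar : infoNCE (supconW cls) (τ⁻¹ • G) =
      (1 / (C : ℝ)) * ∑ c : Fin C,
        (Real.log ((ℓ : ℝ) * ∑ c' : Fin C, Real.exp (f2 c c') - Real.exp (f2 c c)) - f2 c c) := by
    rw [hGf2]
    exact infoNCE_eval hC0 hℓ cls hsize f2
  have hle := hmin _ hmem2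
  rw [hLcand, hLstar] at hle
  have hCinv : (0 : ℝ) < 1 / (C : ℝ) := by positivity
  have hsums := (mul_le_mul_iff_right₀ hCinv).mp hle
  -- normalize candidate terms
  have hterm1 : ∀ c : Fin C,
      Real.log ((ℓ : ℝ) * ∑ c' : Fin C, Real.exp (z c c') - Real.exp (z c c)) - z c c =
      Real.log (A + (ℓ : ℝ) * Wc c) - 1 / τ := by
    intro c
    have hsplit : (∑ c' : Fin C, Real.exp (z c c')) = Real.exp (z c c) + Wc c :=
      (Finset.add_sum_erase _ _ (Finset.mem_univ c)).symm
    have h9 : (ℓ : ℝ) * ∑ c' : Fin C, Real.exp (z c c') - Real.exp (z c c) =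
        A + (ℓ : ℝ) * Wc c := by
      rw [hsplit, hzdiag c, hAdef]; ring
    rw [h9, hzdiag c]
  -- normalize competitor terms
  have hterm2 : ∀ c : Fin C,
      Real.log ((ℓ : ℝ) * ∑ c' : Fin C, Real.exp (f2 c c') - Real.exp (f2 c c)) - f2 c c =
      Real.log (A + Bc) - 1 / τ := by
    intro c
    have hsum2 : (∑ c' : Fin C, Real.exp (f2 c c')) =
        Real.exp (1 / τ) + ((C : ℝ) - 1) * Real.exp zs := by
      rw [Finset.sum_congr rfl fun c' _ => by rw [hf2eq c c']]
      rw [← Finset.add_sum_erase _ _ (Finset.mem_univ c), if_pos rfl]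
      congr 1
      have h10 : ∀ c' ∈ Finset.univ.erase c,
          Real.exp (if c = c' then 1 / τ else zs) = Real.exp zs := by
        intro c' hc'
        rw [if_neg fun h => (Finset.mem_erase.mp hc').1 h.symm]
      rw [Finset.sum_congr rfl h10, Finset.sum_const, nsmul_eq_mul, hcardeR c]
    have hd : f2 c c = 1 / τ := by rw [hf2eq c c, if_pos rfl]
    rw [hsum2, hd]
    have h11 : (ℓ : ℝ) * (Real.exp (1 / τ) + ((C : ℝ) - 1) * Real.exp zs) -
        Real.exp (1 / τ) = A + Bc := by
      rw [hAdef, hBcdef]; ring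
    rw [h11]
  rw [Finset.sum_congr rfl fun c _ => hterm1 c,
    Finset.sum_congr rfl fun c _ => hterm2 c] at hsums
  have key0 : ∑ c : Fin C, Real.log (A + (ℓ : ℝ) * Wc c) ≤ (C : ℝ) * Real.log (A + Bc) := by
    have h11 : ∑ c : Fin C, (Real.log (A + (ℓ : ℝ) * Wc c) - 1 / τ) =
        (∑ c : Fin C, Real.log (A + (ℓ : ℝ) * Wc c)) - (C : ℝ) * (1 / τ) := by
      rw [Finset.sum_sub_distrib, Finset.sum_const, Finset.card_univ, Fintype.card_fin,
        nsmul_eq_mul]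
    have h12 : ∑ _c : Fin C, (Real.log (A + Bc) - 1 / τ) =
        (C : ℝ) * Real.log (A + Bc) - (C : ℝ) * (1 / τ) := by
      rw [Finset.sum_const, Finset.card_univ, Fintype.card_fin, nsmul_eq_mul]; ring
    rw [h11, h12] at hsums
    linarith
  -- lower bound chain
  have step1 : ∀ c, ((C : ℝ) - 1) * Real.exp (m c) ≤ Wc c := by
    intro c
    have h := sum_exp_ge (Finset.univ.erase c) (z c) (m c) (hmsum c)
    rwa [hcardeR c] at h
  have hBe : ∀ c, Bc * Real.exp (m c - zs) =
      (ℓ : ℝ) * (((C : ℝ) - 1) * Real.exp (m c)) := by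
    intro c
    rw [hBcdef, Real.exp_sub]
    field_simp [Real.exp_ne_zero]
  have step2 : ∀ c, Real.log (A + Bc) + lam * (m c - zs) ≤
      Real.log (A + (ℓ : ℝ) * Wc c) := by
    intro c
    have h13 : A + Bc * Real.exp (m c - zs) ≤ A + (ℓ : ℝ) * Wc c := by
      have h := step1 c
      rw [hBe c]
      nlinarith
    calc Real.log (A + Bc) + lam * (m c - zs)
        ≤ Real.log (A + Bc * Real.exp (m c - zs)) := tangent_log hA hB _
      _ ≤ Real.log (A + (ℓ : ℝ) * Wc c) := Real.log_le_log (by positivity) h13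
  -- sum of m c - zs is nonnegative
  have hdouble : ∑ c : Fin C, ∑ c' : Fin C, (inner ℝ (μ c) (μ c') : ℝ) =
      (inner ℝ (∑ c : Fin C, μ c) (∑ c : Fin C, μ c) : ℝ) := by
    rw [sum_inner]
    exact Finset.sum_congr rfl fun c _ => by rw [inner_sum]
  have hip : (0 : ℝ) ≤ (inner ℝ (∑ c : Fin C, μ c) (∑ c : Fin C, μ c) : ℝ) :=
    real_inner_self_nonneg
  have h5 : ∀ c, ∑ c' ∈ Finset.univ.erase c, z c c' = (∑ c' : Fin C, z c c') - 1 / τ := by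
    intro c
    rw [← Finset.add_sum_erase _ (z c) (Finset.mem_univ c), hzdiag c]
    ring
  have h6 : ∑ c : Fin C, ∑ c' : Fin C, z c c' =
      (inner ℝ (∑ c : Fin C, μ c) (∑ c : Fin C, μ c) : ℝ) / τ := by
    rw [← hdouble, Finset.sum_div]
    refine Finset.sum_congr rfl fun c _ => ?_
    rw [Finset.sum_div]
  have step3 : ∑ c : Fin C, (m c - zs) =
      (inner ℝ (∑ c : Fin C, μ c) (∑ c : Fin C, μ c) : ℝ) / (τ * ((C : ℝ) - 1)) := by
    rw [Finset.sum_sub_distrib, Finset.sum_const, Finset.card_univ, Fintype.card_fin,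
      nsmul_eq_mul]
    have h14 : ∑ c : Fin C, m c =
        ((inner ℝ (∑ c : Fin C, μ c) (∑ c : Fin C, μ c) : ℝ) / τ - (C : ℝ) * (1 / τ)) /
          ((C : ℝ) - 1) := by
      simp only [hmdef]
      rw [← Finset.sum_div, Finset.sum_congr rfl fun c _ => h5 c, Finset.sum_sub_distrib,
        h6, Finset.sum_const, Finset.card_univ, Fintype.card_fin, nsmul_eq_mul]
    rw [h14, hzsdef]
    field_simp
    ring
  have step3' : 0 ≤ ∑ c : Fin C, (m c - zs) := by
    rw [step3]; positivity
  have lower : (C : ℝ) * Real.log (A + Bc) + lam * ∑ c : Fin C, (m c - zs) ≤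
      ∑ c : Fin C, Real.log (A + (ℓ : ℝ) * Wc c) := by
    have h := Finset.sum_le_sum fun c (_ : c ∈ Finset.univ) => step2 c
    rw [Finset.sum_add_distrib, Finset.sum_const, Finset.card_univ, Fintype.card_fin,
      nsmul_eq_mul, ← Finset.mul_sum] at h
    exact h
  have hsumzero : ∑ c : Fin C, (m c - zs) = 0 := by
    have h1 : lam * ∑ c : Fin C, (m c - zs) ≤ 0 := by linarith
    have h2 : 0 ≤ lam * ∑ c : Fin C, (m c - zs) := mul_nonneg hlam.le step3'
    have h3 : lam * ∑ c : Fin C, (m c - zs) = 0 := le_antisymm h1 h2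
    exact (mul_eq_zero.mp h3).resolve_left hlam.ne' 
  -- second conclusion
  have hip0 : (inner ℝ (∑ c : Fin C, μ c) (∑ c : Fin C, μ c) : ℝ) = 0 := by
    rw [step3] at hsumzero
    have hne : τ * ((C : ℝ) - 1) ≠ 0 := by positivity
    field_simp at hsumzero
    exact hsumzero.trans (mul_zero _)
  have conc2 : ∑ c : Fin C, μ c = 0 := by
    rwa [inner_self_eq_zero] at hip0
  -- per-class equalities
  rw [hsumzero] at lower
  have hPc : ∀ c : Fin C, Real.log (A + (ℓ : ℝ) * Wc c) =
      Real.log (A + Bc) + lam * (m c - zs) := by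
    have hnonneg : ∀ c ∈ (Finset.univ : Finset (Fin C)),
        0 ≤ Real.log (A + (ℓ : ℝ) * Wc c) - (Real.log (A + Bc) + lam * (m c - zs)) :=
      fun c _ => sub_nonneg.mpr (step2 c)
    have hsum0 : ∑ c : Fin C,
        (Real.log (A + (ℓ : ℝ) * Wc c) - (Real.log (A + Bc) + lam * (m c - zs))) = 0 := by
      rw [Finset.sum_sub_distrib, Finset.sum_add_distrib, Finset.sum_const, Finset.card_univ,
        Fintype.card_fin, nsmul_eq_mul, ← Finset.mul_sum, hsumzero]
      have h17 : ∑ c : Fin C, Real.log (A + (ℓ : ℝ) * Wc c) =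
          (C : ℝ) * Real.log (A + Bc) := by
        linarith [key0, lower]
      rw [h17]; ring
    intro c
    have h := (Finset.sum_eq_zero_iff_of_nonneg hnonneg).mp hsum0 c (Finset.mem_univ c)
    exact sub_eq_zero.mp h
  have hmc : ∀ c : Fin C, m c = zs := by
    intro c
    have h15 : Real.log (A + Bc * Real.exp (m c - zs)) =
        Real.log (A + Bc) + lam * (m c - zs) := by
      have hle1 := tangent_log hA hB (m c - zs)
      rw [← hlamdef] at hle1
      have hle2 : Real.log (A + Bc * Real.exp (m c - zs)) ≤
          Real.log (A + (ℓ : ℝ) * Wc c) := by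
        refine Real.log_le_log (by positivity) ?_
        rw [hBe c]
        nlinarith [step1 c]
      rw [hPc c] at hle2
      linarith
    have h := tangent_log_eq hA hB _ h15
    linarith
  have hWeq : ∀ c : Fin C, Wc c = ((C : ℝ) - 1) * Real.exp (m c) := by
    intro c
    have h16 := hPc c
    rw [hmc c, sub_self, mul_zero, add_zero] at h16
    have h17 : A + (ℓ : ℝ) * Wc c = A + Bc := by
      have e1 := Real.exp_log (hAWpos c)
      have e2 := Real.exp_log hABpos
      rw [h16] at e1
      rw [e2] at e1
      linarith
    have hBc2 : Bc = (ℓ : ℝ) * (((C : ℝ) - 1) * Real.exp (m c)) := by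
      rw [hBcdef, hmc c]; ring
    have h18 : (ℓ : ℝ) * Wc c = (ℓ : ℝ) * (((C : ℝ) - 1) * Real.exp (m c)) := by
      rw [← hBc2]; linarith
    exact mul_left_cancel₀ hℓpos.ne' h18
  have conc1 : ∀ c c' : Fin C, c ≠ c' →
      (inner ℝ (μ c) (μ c') : ℝ) = -1 / ((C : ℝ) - 1) := by
    intro c c' hne
    have hc'mem : c' ∈ Finset.univ.erase c :=
      Finset.mem_erase.mpr ⟨fun h => hne h.symm, Finset.mem_univ c'⟩
    have heq : ∑ x ∈ Finset.univ.erase c, Real.exp (z c x) =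
        (((Finset.univ.erase c).card : ℝ)) * Real.exp (m c) := by
      rw [hcardeR c]
      exact hWeq c
    have hz' := sum_exp_eq (Finset.univ.erase c) (z c) (m c) (hmsum c) heq c' hc'mem
    rw [hmc c] at hz'
    have hz'' : (inner ℝ (μ c) (μ c') : ℝ) / τ = -(1 / (((C : ℝ) - 1) * τ)) := hz'
    have h30 := (div_eq_iff hτne).mp hz''
    rw [h30]
    field_simp
  exact ⟨conc1, conc2⟩
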